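/- Fix δ ∈ (0,1) and λ₀ > 0, and fix C ∈ ℝ^{ℓ×d} such that ‖C X_iᵀ‖ = 1 and |X_i Cᵀ C X_jᵀ| ≤ 2 for all i, j ∈ [n]. Let B(0) ∈ ℝ^{m×ℓ} have i.i.d. N(0,1) entries, and assume λ_min(H(B(0))) ≥ λ₀/2. There exists an absolute constant c > 0 such that, with probability at least 1 − δ over B(0), the following holds with R := c·δ·λ₀/n²: for every matrix B ∈ ℝ^{m×ℓ} satisfying ‖B_r C − B_r(0) C‖ ≤ R for all r ∈ [m], one has ‖H(B) − H(B(0))‖ ≤ λ₀/4 and λ_min(H(B)) ≥ λ₀/4. -/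

import Mathlib

open MeasureTheory ProbabilityTheory Real
open scoped NNReal

noncomputable section

/-- Real-valued indicator of a proposition. -/
def ind (P : Prop) : ℝ := @ite _ P (Classical.dec P) 1 0

/-- Dot product of two real vectors. -/
def dot {p : ℕ} (x y : Fin p → ℝ) : ℝ := ∑ i, x i * y i

/-- Matrix-vector product. -/
def mvec {a b : ℕ} (M : Fin a → Fin b → ℝ) (x : Fin b → ℝ) : Fin a → ℝ := fun i => dot (M i) x

/-- Vector-matrix product. -/
def vmul {a b : ℕ} (x : Fin a → ℝ) (M : Fin a → Fin b → ℝ) : Fin b → ℝ :=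
  fun j => ∑ i, x i * M i j

/-- Euclidean norm of a real vector. -/
def eunorm {p : ℕ} (x : Fin p → ℝ) : ℝ := Real.sqrt (∑ i, x i ^ 2)

/-- ℓ²→ℓ² operator (spectral) norm of a matrix. -/
def specNorm {a b : ℕ} (M : Fin a → Fin b → ℝ) : ℝ :=
  sSup {c : ℝ | ∃ x : Fin b → ℝ, ∑ j, x j ^ 2 ≤ 1 ∧ c = eunorm (mvec M x)}

/-- Smallest eigenvalue of a (symmetric) matrix, as the infimum of the quadratic form
over the unit sphere. -/
def lamMin {n : ℕ} (M : Fin n → Fin n → ℝ) : ℝ :=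
  sInf {c : ℝ | ∃ x : Fin n → ℝ, ∑ i, x i ^ 2 = 1 ∧ c = dot x (mvec M x)}

/-- Standard Gaussian measure on ℝ^b. -/
def stdGaussian (b : ℕ) : Measure (Fin b → ℝ) := Measure.pi fun _ => gaussianReal 0 1

/-- Measure on a×b real matrices with i.i.d. centered Gaussian entries of variance `v`. -/
def gaussMatrix (a b : ℕ) (v : ℝ≥0) : Measure (Fin a → Fin b → ℝ) :=
  Measure.pi fun _ => Measure.pi fun _ => gaussianReal 0 v

/-- Uniform measure on {-1, 1} ⊆ ℝ. -/
def signMeasure : Measure ℝ :=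
  (PMF.uniformOfFinset ({-1, 1} : Finset ℝ) ⟨-1, by simp⟩).toMeasure

instance : IsProbabilityMeasure signMeasure := by
  unfold signMeasure; infer_instance

/-- Uniform measure on {-1,1}^m. -/
def signVec (m : ℕ) : Measure (Fin m → ℝ) := Measure.pi fun _ => signMeasure

instance (b : ℕ) : IsProbabilityMeasure (stdGaussian b) := by
  unfold _root_.stdGaussian; infer_instance

instance (a b : ℕ) (v : ℝ≥0) : IsProbabilityMeasure (gaussMatrix a b v) := by
  unfold gaussMatrix; infer_instance

instance (m : ℕ) : IsProbabilityMeasure (signVec m) := by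
  unfold signVec; infer_instance

/-- Output of the plain two-layer ReLU network. -/
def netPlain {n d m : ℕ} (X : Fin n → Fin d → ℝ) (v : Fin m → ℝ)
    (W : Fin m → Fin d → ℝ) (i : Fin n) : ℝ :=
  (Real.sqrt m)⁻¹ * ∑ r, v r * max 0 (dot (W r) (X i))

/-- Gradient of Φ(W) = ½‖y-u‖² w.r.t. the r-th row of W (plain network). -/
def gradPlain {n d m : ℕ} (X : Fin n → Fin d → ℝ) (v : Fin m → ℝ) (y : Fin n → ℝ)
    (W : Fin m → Fin d → ℝ) (r : Fin m) : Fin d → ℝ :=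
  fun q => -(Real.sqrt m)⁻¹ *
    ∑ j, (y j - netPlain X v W j) * v r * ind (0 ≤ dot (W r) (X j)) * X j q

/-- NTK matrix of the plain network. -/
def HinfPlain {n d : ℕ} (X : Fin n → Fin d → ℝ) (i j : Fin n) : ℝ :=
  ∫ w, dot (X i) (X j) * ind (0 ≤ dot w (X i)) * ind (0 ≤ dot w (X j)) ∂ stdGaussian d

/-- `X_i Cᵀ C X_jᵀ`. -/
def dotC {n d ℓ : ℕ} (X : Fin n → Fin d → ℝ) (C : Fin ℓ → Fin d → ℝ) (i j : Fin n) : ℝ :=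
  dot (mvec C (X i)) (mvec C (X j))

/-- Output of the input-dimension-reduced two-layer ReLU network. -/
def netFac {n d ℓ m : ℕ} (X : Fin n → Fin d → ℝ) (C : Fin ℓ → Fin d → ℝ)
    (v : Fin m → ℝ) (B : Fin m → Fin ℓ → ℝ) (i : Fin n) : ℝ :=
  (Real.sqrt m)⁻¹ * ∑ r, v r * max 0 (dot (B r) (mvec C (X i)))

/-- Gradient of Φ(B) = ½‖y-u‖² w.r.t. the r-th row of B (input-dimension-reduced network). -/
def gradFac {n d ℓ m : ℕ} (X : Fin n → Fin d → ℝ) (C : Fin ℓ → Fin d → ℝ)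
    (v : Fin m → ℝ) (y : Fin n → ℝ) (B : Fin m → Fin ℓ → ℝ) (r : Fin m) : Fin ℓ → ℝ :=
  fun q => -(Real.sqrt m)⁻¹ *
    ∑ j, (y j - netFac X C v B j) * v r * ind (0 ≤ dot (B r) (mvec C (X j))) * mvec C (X j) q

/-- NTK matrix of the input-dimension-reduced network. -/
def HinfFac {n d ℓ : ℕ} (X : Fin n → Fin d → ℝ) (C : Fin ℓ → Fin d → ℝ) (i j : Fin n) : ℝ :=
  ∫ b, dotC X C i j * ind (0 ≤ dot b (mvec C (X i))) * ind (0 ≤ dot b (mvec C (X j)))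
    ∂ stdGaussian ℓ

/-- Empirical NTK matrix of the input-dimension-reduced network at weights B. -/
def HFac {n d ℓ m : ℕ} (X : Fin n → Fin d → ℝ) (C : Fin ℓ → Fin d → ℝ)
    (B : Fin m → Fin ℓ → ℝ) (i j : Fin n) : ℝ :=
  (m : ℝ)⁻¹ * ∑ r, dotC X C i j * ind (0 ≤ dot (B r) (mvec C (X i))) *
    ind (0 ≤ dot (B r) (mvec C (X j)))

/-- Output of the width-reduced two-layer ReLU network (W = A·B·C). -/
def netWidth {n d ℓ k m : ℕ} (X : Fin n → Fin d → ℝ) (C : Fin ℓ → Fin d → ℝ)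
    (A : Fin m → Fin k → ℝ) (v : Fin m → ℝ) (B : Fin k → Fin ℓ → ℝ) (i : Fin n) : ℝ :=
  (Real.sqrt m)⁻¹ * ∑ r, v r * max 0 (dot (A r) (mvec B (mvec C (X i))))

/-- The sign-indicator vector Z_i(B) of the width-reduced network. -/
def Zvec {n d ℓ k m : ℕ} (X : Fin n → Fin d → ℝ) (C : Fin ℓ → Fin d → ℝ)
    (A : Fin m → Fin k → ℝ) (v : Fin m → ℝ) (B : Fin k → Fin ℓ → ℝ) (i : Fin n) :
    Fin m → ℝ :=
  fun r => v r * ind (0 ≤ dot (A r) (mvec B (mvec C (X i))))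

/-- Gradient of Φ(B) = ½‖y-u‖² w.r.t. B (width-reduced network). -/
def gradWidth {n d ℓ k m : ℕ} (X : Fin n → Fin d → ℝ) (C : Fin ℓ → Fin d → ℝ)
    (A : Fin m → Fin k → ℝ) (v : Fin m → ℝ) (y : Fin n → ℝ)
    (B : Fin k → Fin ℓ → ℝ) : Fin k → Fin ℓ → ℝ :=
  fun a b => -(Real.sqrt m)⁻¹ *
    ∑ j, (y j - netWidth X C A v B j) * vmul (Zvec X C A v B j) A a * mvec C (X j) b

/-- Empirical NTK matrix of the width-reduced network at weights B. -/
def HWidth {n d ℓ k m : ℕ} (X : Fin n → Fin d → ℝ) (C : Fin ℓ → Fin d → ℝ)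
    (A : Fin m → Fin k → ℝ) (v : Fin m → ℝ) (B : Fin k → Fin ℓ → ℝ) (i j : Fin n) : ℝ :=
  (m : ℝ)⁻¹ * dotC X C i j * dot (vmul (Zvec X C A v B i) A) (vmul (Zvec X C A v B j) A)

/-- NTK matrix of the width-reduced network. -/
def HinfWidth {n d ℓ k m : ℕ} (X : Fin n → Fin d → ℝ) (C : Fin ℓ → Fin d → ℝ)
    (A : Fin m → Fin k → ℝ) (v : Fin m → ℝ) (i j : Fin n) : ℝ :=
  ∫ B, HWidth X C A v B i j ∂ gaussMatrix k ℓ 1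

/-!
Moving each row `B_r C` by at most `R` moves the pre-activation `B_r · C X_iᵀ` by at most `R`
(Cauchy–Schwarz, `‖X_i‖ = 1`), so the sign pattern can change only at pairs `(r, i)` where
`|B_r(0) · C X_iᵀ| ≤ R`. Every entry of `H(B) - H(B(0))` is then at most `2/m` times the number of
such near-zero pairs at `i` or `j`, and the entrywise `ℓ¹` norm, which dominates both the spectral
norm and the drop of `λ_min`, is at most `4n/m` times the total number `N` of near-zero pairs.

As `‖C X_iᵀ‖ = 1`, the pre-activation `B_r(0) · C X_iᵀ` is standard normal, so a pair is near zero
with probability at most `2R/√(2π) ≤ R`. Markov's inequality gives `N < mλ₀/(16n)` outside a set of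
probability at most `mnR · 16n/(mλ₀)`, which is `δ` for `R = δλ₀/(16n²)`.
-/

open scoped ENNReal
open Finset

lemma dot_comm {p : ℕ} (x y : Fin p → ℝ) : dot x y = dot y x :=
  sum_congr rfl fun _ _ => mul_comm _ _

lemma dot_mvec {d ℓ : ℕ} (C : Fin ℓ → Fin d → ℝ) (w : Fin ℓ → ℝ) (x : Fin d → ℝ) :
    dot w (mvec C x) = dot (vmul w C) x := by
  simp only [dot, mvec, vmul, mul_sum, sum_mul]
  rw [sum_comm]
  exact sum_congr rfl fun _ _ => sum_congr rfl fun _ _ => (mul_assoc _ _ _).symm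

lemma dot_sub_dot {p : ℕ} (x x' y : Fin p → ℝ) :
    dot x y - dot x' y = dot (fun q => x q - x' q) y := by
  simp only [dot, ← sum_sub_distrib, sub_mul]

lemma abs_dot_le_eunorm {p : ℕ} (w x : Fin p → ℝ) (hx : ∑ i, x i ^ 2 = 1) :
    |dot w x| ≤ eunorm w := by
  have hcs := sum_mul_sq_le_sq_mul_sq univ w x
  rw [hx, mul_one] at hcs
  rw [← Real.sqrt_sq_eq_abs, eunorm]
  exact Real.sqrt_le_sqrt hcs

lemma sum_sq_eq_one_of_eunorm_eq_one {p : ℕ} {x : Fin p → ℝ} (hx : eunorm x = 1) :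
    ∑ i, x i ^ 2 = 1 := by
  rwa [eunorm, Real.sqrt_eq_one] at hx

lemma abs_le_one_of_sum_sq_le_one {n : ℕ} {x : Fin n → ℝ} (hx : ∑ i, x i ^ 2 ≤ 1) (i : Fin n) :
    |x i| ≤ 1 := by
  have := (single_le_sum (fun i _ => sq_nonneg (x i)) (mem_univ i)).trans hx
  nlinarith [abs_nonneg (x i), sq_abs (x i)]

lemma abs_dot_le_sum_abs {n : ℕ} (y : Fin n → ℝ) {x : Fin n → ℝ} (hx : ∑ i, x i ^ 2 ≤ 1) :
    |dot y x| ≤ ∑ j, |y j| :=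
  (abs_sum_le_sum_abs _ _).trans <| sum_le_sum fun j _ => by
    rw [abs_mul]
    exact mul_le_of_le_one_right (abs_nonneg _) (abs_le_one_of_sum_sq_le_one hx j)

lemma abs_dot_mvec_le_sum_abs {n : ℕ} (M : Fin n → Fin n → ℝ) {x : Fin n → ℝ}
    (hx : ∑ i, x i ^ 2 ≤ 1) : |dot x (mvec M x)| ≤ ∑ i, ∑ j, |M i j| :=
  (abs_sum_le_sum_abs _ _).trans <| sum_le_sum fun i _ => by
    rw [abs_mul]
    exact (mul_le_of_le_one_left (abs_nonneg _) (abs_le_one_of_sum_sq_le_one hx i)).trans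
      (abs_dot_le_sum_abs (M i) hx)

lemma eunorm_mvec_le_sum_abs {a b : ℕ} (M : Fin a → Fin b → ℝ) {x : Fin b → ℝ}
    (hx : ∑ i, x i ^ 2 ≤ 1) : eunorm (mvec M x) ≤ ∑ i, ∑ j, |M i j| := by
  have hrow : ∀ i, 0 ≤ ∑ j, |M i j| := fun i => sum_nonneg fun j _ => abs_nonneg _
  calc eunorm (mvec M x) ≤ √((∑ i, ∑ j, |M i j|) ^ 2) := by
        refine Real.sqrt_le_sqrt ((sum_le_sum fun i _ => ?_).trans
          (sum_sq_le_sq_sum_of_nonneg fun i _ => hrow i))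
        rw [← sq_abs]
        exact pow_le_pow_left₀ (abs_nonneg _) (abs_dot_le_sum_abs (M i) hx) 2
    _ = ∑ i, ∑ j, |M i j| := Real.sqrt_sq (sum_nonneg fun i _ => hrow i)

lemma specNorm_le_sum_abs {a b : ℕ} (M : Fin a → Fin b → ℝ) :
    specNorm M ≤ ∑ i, ∑ j, |M i j| := by
  refine csSup_le ⟨_, 0, by simp, rfl⟩ ?_
  rintro _ ⟨x, hx, rfl⟩
  exact eunorm_mvec_le_sum_abs M hx

lemma lamMin_le_dot_mvec {n : ℕ} (M : Fin n → Fin n → ℝ) {x : Fin n → ℝ}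
    (hx : ∑ i, x i ^ 2 = 1) : lamMin M ≤ dot x (mvec M x) := by
  refine csInf_le ⟨-∑ i, ∑ j, |M i j|, ?_⟩ ⟨x, hx, rfl⟩
  rintro _ ⟨y, hy, rfl⟩
  exact neg_le_of_abs_le (abs_dot_mvec_le_sum_abs M hy.le)

lemma le_lamMin {n : ℕ} (hn : 0 < n) (M : Fin n → Fin n → ℝ) {c : ℝ}
    (h : ∀ x : Fin n → ℝ, ∑ i, x i ^ 2 = 1 → c ≤ dot x (mvec M x)) : c ≤ lamMin M := by
  refine le_csInf ⟨_, Pi.single ⟨0, hn⟩ 1, ?_, rfl⟩ ?_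
  · simp [Pi.single_apply, apply_ite (· ^ 2)]
  · rintro _ ⟨x, hx, rfl⟩
    exact h x hx

lemma lamMin_sub_sum_abs_le {n : ℕ} (hn : 0 < n) (M N : Fin n → Fin n → ℝ) :
    lamMin N - ∑ i, ∑ j, |M i j - N i j| ≤ lamMin M := by
  refine le_lamMin hn M fun x hx => ?_
  have hdiff : dot x (mvec M x) - dot x (mvec N x) = dot x (mvec (fun i j => M i j - N i j) x) := by
    simp only [dot, mvec, ← sum_sub_distrib, ← mul_sub, sub_mul]
  have := neg_le_of_abs_le (abs_dot_mvec_le_sum_abs (fun i j => M i j - N i j) hx.le)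
  linarith [lamMin_le_dot_mvec N hx]

lemma abs_ind_le_one (P : Prop) : |ind P| ≤ 1 := by
  unfold ind; split_ifs <;> norm_num

lemma abs_ind_sub_ind_le_one (P Q : Prop) : |ind P - ind Q| ≤ 1 := by
  unfold ind; split_ifs <;> norm_num

lemma ind_nonneg_eq_of_abs_sub_le {R b b₀ : ℝ} (hb : |b - b₀| ≤ R) (hfar : R < |b₀|) :
    ind (0 ≤ b) = ind (0 ≤ b₀) := by
  have hb' := abs_le.mp hb
  rcases lt_abs.mp hfar with h | h
  · simp [ind, show 0 ≤ b by linarith, show 0 ≤ b₀ by linarith]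
  · simp [ind, show ¬ 0 ≤ b by linarith, show ¬ 0 ≤ b₀ by linarith]

lemma abs_ind_nonneg_sub_le {R b b₀ : ℝ} (hb : |b - b₀| ≤ R) :
    |ind (0 ≤ b) - ind (0 ≤ b₀)| ≤ ind (|b₀| ≤ R) := by
  by_cases hnear : |b₀| ≤ R
  · simpa [ind, hnear] using abs_ind_sub_ind_le_one (0 ≤ b) (0 ≤ b₀)
  · rw [ind_nonneg_eq_of_abs_sub_le hb (not_le.mp hnear), sub_self]
    simp [ind, hnear]

lemma abs_mul_sub_mul_le {a b a' b' : ℝ} (ha : |a| ≤ 1) (hb' : |b'| ≤ 1) :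
    |a * b - a' * b'| ≤ |a - a'| + |b - b'| :=
  calc |a * b - a' * b'| = |a * (b - b') + (a - a') * b'| := by ring_nf
    _ ≤ |a| * |b - b'| + |a - a'| * |b'| := by
        rw [← abs_mul, ← abs_mul]; exact abs_add_le _ _
    _ ≤ |b - b'| + |a - a'| := by
        gcongr
        · exact mul_le_of_le_one_left (abs_nonneg _) ha
        · exact mul_le_of_le_one_right (abs_nonneg _) hb'
    _ = |a - a'| + |b - b'| := add_comm _ _

lemma sum_ind_eq_card {ι κ : Type*} [Fintype ι] [Fintype κ] (P : κ → ι → Prop)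
    [∀ r i, Decidable (P r i)] : ∑ r, ∑ i, ind (P r i) = #{p : κ × ι | P p.1 p.2} := by
  rw [← Fintype.sum_prod_type', ← sum_boole]
  exact sum_congr rfl fun p _ => by unfold ind; congr

lemma sum_sum_sum_add {ι κ : Type*} [Fintype ι] [Fintype κ] (f : κ → ι → ℝ) :
    ∑ i, ∑ j, ∑ r, (f r i + f r j) = 2 * Fintype.card ι * ∑ r, ∑ i, f r i := by
  simp only [sum_add_distrib, sum_const, card_univ, nsmul_eq_mul, ← mul_sum]
  rw [sum_comm (f := fun i r => f r i)]
  ring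

lemma abs_HFac_sub_le {n d ℓ m : ℕ} (X : Fin n → Fin d → ℝ) (C : Fin ℓ → Fin d → ℝ)
    (hC : ∀ i j, |dotC X C i j| ≤ 2) {R : ℝ} (B B₀ : Fin m → Fin ℓ → ℝ)
    (hB : ∀ r i, |dot (B r) (mvec C (X i)) - dot (B₀ r) (mvec C (X i))| ≤ R) (i j : Fin n) :
    |HFac X C B i j - HFac X C B₀ i j| ≤ (m : ℝ)⁻¹ * ∑ r, 2 *
      (ind (|dot (B₀ r) (mvec C (X i))| ≤ R) + ind (|dot (B₀ r) (mvec C (X j))| ≤ R)) := by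
  unfold HFac
  rw [← mul_sub, ← sum_sub_distrib, abs_mul, abs_inv, Nat.abs_cast]
  refine mul_le_mul_of_nonneg_left ((abs_sum_le_sum_abs _ _).trans (sum_le_sum fun r _ => ?_))
    (by positivity)
  rw [mul_assoc, mul_assoc, ← mul_sub, abs_mul]
  refine mul_le_mul (hC i j) ?_ (abs_nonneg _) zero_le_two
  exact (abs_mul_sub_mul_le (abs_ind_le_one _) (abs_ind_le_one _)).trans
    (add_le_add (abs_ind_nonneg_sub_le (hB r i)) (abs_ind_nonneg_sub_le (hB r j)))

lemma sum_sum_abs_HFac_sub_le {n d ℓ m : ℕ} (X : Fin n → Fin d → ℝ) (C : Fin ℓ → Fin d → ℝ)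
    (hC : ∀ i j, |dotC X C i j| ≤ 2) {R : ℝ} (B B₀ : Fin m → Fin ℓ → ℝ)
    (hB : ∀ r i, |dot (B r) (mvec C (X i)) - dot (B₀ r) (mvec C (X i))| ≤ R) :
    ∑ i, ∑ j, |HFac X C B i j - HFac X C B₀ i j| ≤
      4 * n / m * #{p : Fin m × Fin n | |dot (B₀ p.1) (mvec C (X p.2))| ≤ R} := by
  calc ∑ i, ∑ j, |HFac X C B i j - HFac X C B₀ i j|
      ≤ ∑ i, ∑ j, (m : ℝ)⁻¹ * ∑ r, 2 *
          (ind (|dot (B₀ r) (mvec C (X i))| ≤ R) + ind (|dot (B₀ r) (mvec C (X j))| ≤ R)) :=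
        sum_le_sum fun i _ => sum_le_sum fun j _ => abs_HFac_sub_le X C hC B B₀ hB i j
    _ = 4 * n / m * #{p : Fin m × Fin n | |dot (B₀ p.1) (mvec C (X p.2))| ≤ R} := by
        simp only [← mul_sum, sum_sum_sum_add, sum_ind_eq_card, Fintype.card_fin]
        ring

theorem HFac_stable_of_card_near_le {n d ℓ m : ℕ} (hn : 0 < n) (hm : 0 < m)
    (X : Fin n → Fin d → ℝ) (hX : ∀ i, ∑ j, X i j ^ 2 = 1)
    (C : Fin ℓ → Fin d → ℝ) (hC : ∀ i j, |dotC X C i j| ≤ 2) {lam0 R : ℝ}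
    (B₀ B : Fin m → Fin ℓ → ℝ)
    (hB : ∀ r, eunorm (fun q => vmul (B r) C q - vmul (B₀ r) C q) ≤ R)
    (hnear : (#{p : Fin m × Fin n | |dot (B₀ p.1) (mvec C (X p.2))| ≤ R} : ℝ) ≤
      m * lam0 / (16 * n))
    (hmin : lam0 / 2 ≤ lamMin (HFac X C B₀)) :
    specNorm (fun i j => HFac X C B i j - HFac X C B₀ i j) ≤ lam0 / 4 ∧
      lam0 / 4 ≤ lamMin (HFac X C B) := by
  have hBX : ∀ r i, |dot (B r) (mvec C (X i)) - dot (B₀ r) (mvec C (X i))| ≤ R := fun r i => by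
    rw [dot_mvec, dot_mvec, dot_sub_dot]
    exact (abs_dot_le_eunorm _ _ (hX i)).trans (hB r)
  have hsum : ∑ i, ∑ j, |HFac X C B i j - HFac X C B₀ i j| ≤ lam0 / 4 := by
    refine (sum_sum_abs_HFac_sub_le X C hC B B₀ hBX).trans ?_
    calc 4 * n / m * (#{p : Fin m × Fin n | |dot (B₀ p.1) (mvec C (X p.2))| ≤ R} : ℝ)
        ≤ 4 * n / m * (m * lam0 / (16 * n)) := by gcongr
      _ = lam0 / 4 := by field_simp; ring
  refine ⟨(specNorm_le_sum_abs _).trans hsum, ?_⟩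
  linarith [lamMin_sub_sum_abs_le hn (HFac X C B) (HFac X C B₀)]

namespace ProbabilityTheory

lemma gaussianPDFReal_le (μ : ℝ) (v : ℝ≥0) (x : ℝ) :
    gaussianPDFReal μ v x ≤ (√(2 * π * v))⁻¹ := by
  rw [gaussianPDFReal_def]
  refine mul_le_of_le_one_right (by positivity) (Real.exp_le_one_iff.mpr ?_)
  exact div_nonpos_of_nonpos_of_nonneg (neg_nonpos.mpr (sq_nonneg _)) (by positivity)

lemma gaussianReal_le_mul_volume (μ : ℝ) {v : ℝ≥0} (hv : v ≠ 0) (s : Set ℝ) :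
    gaussianReal μ v s ≤ ENNReal.ofReal (√(2 * π * v))⁻¹ * volume s := by
  rw [gaussianReal_apply μ hv, ← setLIntegral_const]
  exact lintegral_mono fun x => ENNReal.ofReal_le_ofReal (gaussianPDFReal_le μ v x)

lemma gaussianReal_Icc_neg_le {R : ℝ} (hR : 0 ≤ R) :
    gaussianReal 0 1 (Set.Icc (-R) R) ≤ ENNReal.ofReal R := by
  have hsqrt : 2 ≤ √(2 * π) := Real.le_sqrt_of_sq_le (by nlinarith [Real.pi_gt_three])
  calc gaussianReal 0 1 (Set.Icc (-R) R)
      ≤ ENNReal.ofReal (√(2 * π))⁻¹ * ENNReal.ofReal (2 * R) := by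
        have := gaussianReal_le_mul_volume 0 one_ne_zero (Set.Icc (-R) R)
        rwa [Real.volume_Icc, sub_neg_eq_add, ← two_mul, NNReal.coe_one, mul_one] at this
    _ = ENNReal.ofReal ((√(2 * π))⁻¹ * (2 * R)) := (ENNReal.ofReal_mul (by positivity)).symm
    _ ≤ ENNReal.ofReal R := by
        refine ENNReal.ofReal_le_ofReal ?_
        rw [inv_mul_le_iff₀ (by positivity)]
        nlinarith

end ProbabilityTheory

namespace MeasureTheory

lemma measure_le_card_le_sum_div {Ω ι : Type*} [MeasurableSpace Ω] [Fintype ι] (μ : Measure Ω)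
    (P : ι → Ω → Prop) [∀ k ω, Decidable (P k ω)] (hP : ∀ k, MeasurableSet {ω | P k ω})
    {t : ℝ≥0∞} (ht₀ : t ≠ 0) (ht : t ≠ ∞) :
    μ {ω | t ≤ #{k | P k ω}} ≤ (∑ k, μ {ω | P k ω}) / t := by
  have hcard : ∀ ω, (#{k | P k ω} : ℝ≥0∞) = ∑ k, {ω | P k ω}.indicator 1 ω := fun ω => by
    simp [Set.indicator_apply]
  have hmeas : ∀ k, Measurable ({ω | P k ω}.indicator (1 : Ω → ℝ≥0∞)) := fun k =>
    measurable_one.indicator (hP k)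
  simp_rw [hcard]
  refine (meas_ge_le_lintegral_div (Finset.measurable_sum _ fun k _ => hmeas k).aemeasurable
    ht₀ ht).trans_eq ?_
  rw [lintegral_finsetSum _ fun k _ => hmeas k]
  simp_rw [lintegral_indicator_one (hP _)]

lemma one_sub_le_toReal_of_compl_subset {Ω : Type*} [MeasurableSpace Ω] {μ : Measure Ω}
    [IsProbabilityMeasure μ] {S T : Set Ω} (hTS : Tᶜ ⊆ S) {ε : ℝ} (hε : 0 ≤ ε)
    (hT : μ T ≤ ENNReal.ofReal ε) : 1 - ε ≤ (μ S).toReal := by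
  have h : 1 ≤ ENNReal.ofReal ε + μ S :=
    calc 1 = μ (T ∪ Tᶜ) := by rw [Set.union_compl_self, measure_univ]
      _ ≤ μ T + μ Tᶜ := measure_union_le _ _
      _ ≤ ENNReal.ofReal ε + μ S := add_le_add hT (measure_mono hTS)
  have := ENNReal.toReal_mono (by finiteness) h
  rw [ENNReal.toReal_add ENNReal.ofReal_ne_top (measure_ne_top _ _), ENNReal.toReal_ofReal hε,
    ENNReal.toReal_one] at this
  linarith

end MeasureTheory

lemma measurable_dot {p : ℕ} (a : Fin p → ℝ) : Measurable (dot a) :=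
  Finset.measurable_sum _ fun _ _ => by fun_prop

lemma setOf_abs_dot_le {p : ℕ} (a : Fin p → ℝ) (R : ℝ) :
    {b | |dot b a| ≤ R} = dot a ⁻¹' Set.Icc (-R) R := by
  ext b; simp [dot_comm b a, abs_le]

lemma map_dot_stdGaussian {p : ℕ} (a : Fin p → ℝ) :
    (_root_.stdGaussian p).map (dot a) = gaussianReal 0 (∑ i, a i ^ 2).toNNReal := by
  have hdot : dot a = innerSL ℝ (WithLp.toLp 2 a : EuclideanSpace ℝ (Fin p)) ∘ WithLp.toLp 2 := by
    funext b
    simp [dot, EuclideanSpace.inner_eq_star_dotProduct, dotProduct, mul_comm]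
  rw [hdot, _root_.stdGaussian, ← Measure.map_map (by fun_prop) (by fun_prop),
    map_pi_eq_stdGaussian, IsGaussian.map_eq_gaussianReal, integral_strongDual_stdGaussian,
    variance_dual_stdGaussian, innerSL_apply_norm, EuclideanSpace.real_norm_sq_eq]

lemma stdGaussian_abs_dot_le {p : ℕ} {a : Fin p → ℝ} (ha : ∑ i, a i ^ 2 = 1) {R : ℝ}
    (hR : 0 ≤ R) : _root_.stdGaussian p {b | |dot b a| ≤ R} ≤ ENNReal.ofReal R := by
  rw [setOf_abs_dot_le, ← Measure.map_apply (measurable_dot a) measurableSet_Icc,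
    map_dot_stdGaussian, ha, Real.toNNReal_one]
  exact gaussianReal_Icc_neg_le hR

lemma gaussMatrix_card_near_zero_ge_le {n ℓ m : ℕ} {a : Fin n → Fin ℓ → ℝ}
    (ha : ∀ i, ∑ q, a i q ^ 2 = 1) {R t : ℝ} (hR : 0 ≤ R) (ht : 0 < t) :
    gaussMatrix m ℓ 1 {B₀ | ENNReal.ofReal t ≤ #{p : Fin m × Fin n | |dot (B₀ p.1) (a p.2)| ≤ R}}
      ≤ ENNReal.ofReal (m * n * R / t) := by
  have hmeas : ∀ i, MeasurableSet {b | |dot b (a i)| ≤ R} := fun i => by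
    rw [setOf_abs_dot_le]; exact measurable_dot _ measurableSet_Icc
  have hrow : ∀ p : Fin m × Fin n,
      gaussMatrix m ℓ 1 {B₀ | |dot (B₀ p.1) (a p.2)| ≤ R} ≤ ENNReal.ofReal R := fun p => by
    have hmap : (gaussMatrix m ℓ 1).map (Function.eval p.1) = _root_.stdGaussian ℓ :=
      (measurePreserving_eval _ p.1).map_eq
    rw [show {B₀ : Fin m → Fin ℓ → ℝ | |dot (B₀ p.1) (a p.2)| ≤ R} =
        Function.eval p.1 ⁻¹' {b | |dot b (a p.2)| ≤ R} from rfl,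
      ← Measure.map_apply (measurable_pi_apply p.1) (hmeas p.2), hmap]
    exact stdGaussian_abs_dot_le (ha p.2) hR
  have key := measure_le_card_le_sum_div (gaussMatrix m ℓ 1)
    (fun (p : Fin m × Fin n) (B₀ : Fin m → Fin ℓ → ℝ) => |dot (B₀ p.1) (a p.2)| ≤ R)
    (fun p => (hmeas p.2).preimage (measurable_pi_apply p.1)) (t := ENNReal.ofReal t)
    (by simpa using ht) ENNReal.ofReal_ne_top
  refine (key.trans (ENNReal.div_le_div_right (sum_le_sum fun p _ => hrow p) _)).trans_eq ?_
  rw [ENNReal.ofReal_div_of_pos ht, sum_const, card_univ, Fintype.card_prod,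
    Fintype.card_fin, Fintype.card_fin, nsmul_eq_mul, ENNReal.ofReal_mul (by positivity),
    ENNReal.ofReal_mul (by positivity), ENNReal.ofReal_natCast, ENNReal.ofReal_natCast]
  push_cast
  ring

theorem stmt3 :
    ∃ c : ℝ, 0 < c ∧
    ∀ (n d ℓ m : ℕ), 0 < n → 0 < m →
    ∀ X : Fin n → Fin d → ℝ, (∀ i, ∑ j, X i j ^ 2 = 1) →
    ∀ C : Fin ℓ → Fin d → ℝ,
      (∀ i, eunorm (mvec C (X i)) = 1) → (∀ i j, |dotC X C i j| ≤ 2) →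
    ∀ δ lam0 : ℝ, 0 < δ → δ < 1 → 0 < lam0 →
    1 - δ ≤
      ((gaussMatrix m ℓ 1)
        {B0 : Fin m → Fin ℓ → ℝ |
          lam0 / 2 ≤ lamMin (HFac X C B0) →
          ∀ B : Fin m → Fin ℓ → ℝ,
            (∀ r, eunorm (fun q => vmul (B r) C q - vmul (B0 r) C q) ≤
              c * δ * lam0 / (n : ℝ) ^ 2) →
            specNorm (fun i j => HFac X C B i j - HFac X C B0 i j) ≤ lam0 / 4 ∧
              lam0 / 4 ≤ lamMin (HFac X C B)}).toReal := by
  refine ⟨1 / 16, by norm_num, fun n d ℓ m hn hm X hX C hCX hC δ lam0 hδ _ hlam0 => ?_⟩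
  set R := 1 / 16 * δ * lam0 / (n : ℝ) ^ 2
  set t := m * lam0 / (16 * n)
  have hnear := gaussMatrix_card_near_zero_ge_le (m := m)
    (fun i => sum_sq_eq_one_of_eunorm_eq_one (hCX i)) (by positivity : 0 ≤ R)
    (by positivity : 0 < t)
  have hδ' : (m * n * R / t : ℝ) = δ := by
    simp only [R, t]
    field_simp
  rw [hδ'] at hnear
  refine one_sub_le_toReal_of_compl_subset ?_ hδ.le hnear
  intro B₀ hB₀ hmin B hB
  refine HFac_stable_of_card_near_le hn hm X hX C hC B₀ B hB ?_ hmin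
  exact (ENNReal.natCast_lt_ofReal.mp (not_le.mp hB₀)).le
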